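/- Let $(h^m)$ be a sequence in $L^1((0,T))$ bounded in $L^1$ norm, converging a.e. on $(0,T)$ to $h\in L^1((0,T))$. Let $p:[0,\infty)\to(0,\infty)$ be continuous and bounded with $\lim_{s\to\infty}p(s)=0$. Then $\lim_{\alpha\to 0^+}\lim_{m\to\infty}\int_0^T h^m(t)\,p(|h^m(t)|)^\alpha\,dt = \int_0^T h(t)\,dt$, where the inner limit exists for each $\alpha>0$. -/

import Mathlib

open MeasureTheory Filter Set Topology Asymptotics

/-! For fixed `α > 0` the nonlinearity `F x = x * p |x| ^ α` is continuous and `o(x)` at infinity,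
so it differs from a bounded continuous function (`F` composed with a truncation) by at most
`ε * |x|`. Along the sequence this error costs at most `ε` times the `L¹` bound, while the bounded
part converges by dominated convergence; hence the inner limit is `∫ h * p |h| ^ α`. As `α → 0⁺`,
`p |h| ^ α → 1` pointwise and stays below `max M 1` for `α < 1` (with `M` a bound for `p`), and
dominated convergence gives `∫ h`. -/

section Sublinear

variable {F : ℝ → ℝ}

lemma exists_bounded_continuous_approx_of_isLittleO (hF_cont : Continuous F)
    (hF : F =o[cocompact ℝ] id) {ε : ℝ} (hε : 0 < ε) :
    ∃ G : ℝ → ℝ, Continuous G ∧ (∃ B, ∀ x, |G x| ≤ B) ∧ ∀ x, |F x - G x| ≤ ε * |x| := by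
  obtain ⟨K₀, hK₀⟩ : ∃ K, ∀ x, K ≤ |x| → |F x| ≤ ε / 2 * |x| := by
    have hbound := hF.bound (half_pos hε)
    rw [cocompact_eq_atBot_atTop, ← comap_abs_atTop, eventually_comap, eventually_atTop] at hbound
    obtain ⟨K, hK⟩ := hbound
    exact ⟨K, fun x hx => hK _ hx x rfl⟩
  set K := max K₀ 0
  have hK0 : 0 ≤ K := le_max_right _ _
  set clamp : ℝ → ℝ := fun x => max (-K) (min K x) with hclamp
  have hclamp_mem : ∀ x, clamp x ∈ Icc (-K) K := fun x =>
    ⟨le_max_left _ _, max_le (by linarith) (min_le_left _ _)⟩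
  obtain ⟨B, hB⟩ := isCompact_Icc.exists_bound_of_continuousOn hF_cont.continuousOn
  refine ⟨fun x => F (clamp x), hF_cont.comp (by fun_prop), ⟨B, fun x => hB _ (hclamp_mem x)⟩,
    fun x => ?_⟩
  show |F x - F (clamp x)| ≤ ε * |x|
  rcases le_or_gt |x| K with hx | hx
  · have : clamp x = x := by
      simp only [hclamp, min_eq_right (abs_le.1 hx).2, max_eq_right (abs_le.1 hx).1]
    rw [this, sub_self, abs_zero]
    positivity
  · have hclampK : |clamp x| = K := by
      rcases lt_abs.1 hx with hx' | hx'
      · simp [hclamp, min_eq_left hx'.le, abs_of_nonneg hK0, max_eq_right (neg_le_self hK0)]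
      · simp [hclamp, min_eq_right (by linarith : x ≤ K), max_eq_left (by linarith : x ≤ -K),
          abs_of_nonneg hK0]
    calc |F x - F (clamp x)| ≤ |F x| + |F (clamp x)| := abs_sub _ _
      _ ≤ ε / 2 * |x| + ε / 2 * |x| := by
        gcongr
        · exact hK₀ x ((le_max_left _ _).trans hx.le)
        · calc |F (clamp x)| ≤ ε / 2 * |clamp x| := hK₀ _ (hclampK ▸ le_max_left _ _)
            _ ≤ ε / 2 * |x| := by rw [hclampK]; gcongr
      _ = ε * |x| := by ring

variable {X : Type*} [MeasurableSpace X] {μ : Measure X} [IsFiniteMeasure μ]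

lemma integrable_comp_of_abs_le {G : ℝ → ℝ} (hG_cont : Continuous G) {B : ℝ}
    (hB : ∀ x, |G x| ≤ B) {g : X → ℝ} (hg : AEStronglyMeasurable g μ) :
    Integrable (fun x => G (g x)) μ :=
  (integrable_const B).mono' (hG_cont.comp_aestronglyMeasurable hg) (ae_of_all _ fun _ => hB _)

lemma MeasureTheory.Integrable.comp_of_isLittleO (hF_cont : Continuous F)
    (hF : F =o[cocompact ℝ] id)
    {g : X → ℝ} (hg : Integrable g μ) : Integrable (fun x => F (g x)) μ := by
  obtain ⟨G, hG_cont, ⟨B, hB⟩, hFG⟩ :=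
    exists_bounded_continuous_approx_of_isLittleO hF_cont hF one_pos
  refine (hg.abs.add (integrable_const B)).mono'
    (hF_cont.comp_aestronglyMeasurable hg.aestronglyMeasurable) (ae_of_all _ fun x => ?_)
  calc ‖F (g x)‖ ≤ |F (g x) - G (g x)| + |G (g x)| := by
        simpa [Real.norm_eq_abs] using abs_add_le (F (g x) - G (g x)) (G (g x))
    _ ≤ |g x| + B := by linarith [hFG (g x), hB (g x)]

lemma dist_integral_comp_le (hF_cont : Continuous F) (hF : F =o[cocompact ℝ] id)
    {G : ℝ → ℝ} (hG_cont : Continuous G) {B : ℝ} (hB : ∀ x, |G x| ≤ B)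
    {ε : ℝ} (hFG : ∀ x, |F x - G x| ≤ ε * |x|) {g : X → ℝ} (hg : Integrable g μ) :
    dist (∫ x, F (g x) ∂μ) (∫ x, G (g x) ∂μ) ≤ ε * ∫ x, |g x| ∂μ := by
  rw [dist_eq_norm, ← integral_sub (hg.comp_of_isLittleO hF_cont hF)
    (integrable_comp_of_abs_le hG_cont hB hg.aestronglyMeasurable), ← integral_const_mul]
  exact norm_integral_le_of_norm_le (hg.abs.const_mul ε) (ae_of_all _ fun x => hFG (g x))

lemma tendsto_integral_comp_of_abs_le {G : ℝ → ℝ} (hG_cont : Continuous G) {B : ℝ}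
    (hB : ∀ x, |G x| ≤ B) {f : ℕ → X → ℝ} {h : X → ℝ}
    (hf : ∀ m, AEStronglyMeasurable (f m) μ)
    (hae : ∀ᵐ x ∂μ, Tendsto (fun m => f m x) atTop (𝓝 (h x))) :
    Tendsto (fun m => ∫ x, G (f m x) ∂μ) atTop (𝓝 (∫ x, G (h x) ∂μ)) :=
  tendsto_integral_of_dominated_convergence (fun _ => B)
    (fun m => hG_cont.comp_aestronglyMeasurable (hf m)) (integrable_const B)
    (fun _ => ae_of_all _ fun _ => hB _)
    (hae.mono fun _ hx => (hG_cont.tendsto _).comp hx)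

theorem tendsto_integral_comp_of_isLittleO (hF_cont : Continuous F) (hF : F =o[cocompact ℝ] id)
    {f : ℕ → X → ℝ} {h : X → ℝ} (hf : ∀ m, Integrable (f m) μ) {C : ℝ}
    (hC : ∀ m, ∫ x, |f m x| ∂μ ≤ C) (hh : Integrable h μ)
    (hae : ∀ᵐ x ∂μ, Tendsto (fun m => f m x) atTop (𝓝 (h x))) :
    Tendsto (fun m => ∫ x, F (f m x) ∂μ) atTop (𝓝 (∫ x, F (h x) ∂μ)) := by
  rw [Metric.tendsto_atTop]
  intro ε hε
  set I := ∫ x, |h x| ∂μ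
  have hC0 : 0 ≤ C := (integral_nonneg fun _ => abs_nonneg _).trans (hC 0)
  have hI0 : 0 ≤ I := integral_nonneg fun _ => abs_nonneg _
  set η := ε / (2 * (C + I + 1))
  have hη : 0 < η := by positivity
  have hηCI : η * (C + I) < ε / 2 := by
    rw [div_mul_eq_mul_div, div_lt_div_iff₀ (by positivity) two_pos]
    nlinarith
  obtain ⟨G, hG_cont, ⟨B, hB⟩, hFG⟩ :=
    exists_bounded_continuous_approx_of_isLittleO hF_cont hF hη
  obtain ⟨N, hN⟩ := Metric.tendsto_atTop.1 (tendsto_integral_comp_of_abs_le hG_cont hB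
    (fun m => (hf m).aestronglyMeasurable) hae) (ε / 2) (half_pos hε)
  refine ⟨N, fun m hm => ?_⟩
  have hfm := dist_integral_comp_le hF_cont hF hG_cont hB hFG (hf m)
  have hh := dist_integral_comp_le hF_cont hF hG_cont hB hFG hh
  have hfmC : η * ∫ x, |f m x| ∂μ ≤ η * C := by gcongr; exact hC m
  have hsplit := dist_triangle4 (∫ x, F (f m x) ∂μ) (∫ x, G (f m x) ∂μ) (∫ x, G (h x) ∂μ)
    (∫ x, F (h x) ∂μ)
  rw [dist_comm (∫ x, G (h x) ∂μ)] at hsplit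
  linarith [hN m hm]

end Sublinear

lemma isLittleO_self_mul_rpow_of_tendsto_zero {ι : Type*} {l : Filter ι} {u q : ι → ℝ}
    (hq : Tendsto q l (𝓝 0)) {α : ℝ} (hα : 0 < α) :
    (fun x => u x * q x ^ α) =o[l] u := by
  have hqα : Tendsto (fun x => q x ^ α) l (𝓝 0) := by
    simpa [Function.comp_def, Real.zero_rpow hα.ne'] using
      (Real.continuousAt_rpow_const 0 α (Or.inr hα.le)).tendsto.comp hq
  simpa using (isBigO_refl u l).mul_isLittleO ((isLittleO_one_iff ℝ).2 hqα)

lemma tendsto_integral_mul_rpow_nhdsGT_zero {X : Type*} [MeasurableSpace X] {μ : Measure X}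
    {g w : X → ℝ} (hg : Integrable g μ) (hw : AEMeasurable w μ) (hw_pos : ∀ x, 0 < w x)
    {M : ℝ} (hwM : ∀ x, w x ≤ M) :
    Tendsto (fun α : ℝ => ∫ x, g x * w x ^ α ∂μ) (𝓝[>] 0) (𝓝 (∫ x, g x ∂μ)) := by
  refine tendsto_integral_filter_of_dominated_convergence (fun x => |g x| * max M 1)
    (Eventually.of_forall fun α =>
      hg.aestronglyMeasurable.mul (hw.pow_const α).aestronglyMeasurable)
    ?_ (hg.abs.mul_const _) (ae_of_all _ fun x => ?_)
  · filter_upwards [Ioo_mem_nhdsGT one_pos] with α hα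
    refine ae_of_all _ fun x => ?_
    rw [Real.norm_eq_abs, abs_mul, abs_of_pos (Real.rpow_pos_of_pos (hw_pos x) _)]
    gcongr
    rcases le_total (w x) 1 with hw1 | hw1
    · exact (Real.rpow_le_one (hw_pos x).le hw1 hα.1.le).trans (le_max_right _ _)
    · calc w x ^ α ≤ w x ^ (1 : ℝ) := Real.rpow_le_rpow_of_exponent_le hw1 hα.2.le
        _ ≤ max M 1 := by rw [Real.rpow_one]; exact (hwM x).trans (le_max_left _ _)
  · have hlim := (Real.continuousAt_const_rpow (b := 0) (hw_pos x).ne').tendsto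
    simpa using (hlim.mono_left nhdsWithin_le_nhds).const_mul (g x)

theorem stmt1_general (T : ℝ)
    (f : ℕ → ℝ → ℝ) (h : ℝ → ℝ) (p : ℝ → ℝ)
    (hf_int : ∀ m, IntegrableOn (f m) (Set.Ioo 0 T))
    (hf_bdd : ∃ C : ℝ, ∀ m, (∫ t in Set.Ioo (0:ℝ) T, |f m t|) ≤ C)
    (h_int : IntegrableOn h (Set.Ioo 0 T))
    (hae : ∀ᵐ t ∂(volume.restrict (Set.Ioo (0:ℝ) T)),
      Tendsto (fun m => f m t) atTop (𝓝 (h t)))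
    (hp_cont : ContinuousOn p (Set.Ici 0))
    (hp_pos : ∀ s ∈ Set.Ici (0:ℝ), 0 < p s)
    (hp_bdd : ∃ M : ℝ, ∀ s ∈ Set.Ici (0:ℝ), p s ≤ M)
    (hp_lim : Tendsto p atTop (𝓝 0)) :
    ∃ L : ℝ → ℝ,
      (∀ α > (0:ℝ), Tendsto
        (fun m => ∫ t in Set.Ioo (0:ℝ) T, f m t * p |f m t| ^ α) atTop (𝓝 (L α))) ∧
      Tendsto L (𝓝[>] (0:ℝ)) (𝓝 (∫ t in Set.Ioo (0:ℝ) T, h t)) := by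
  obtain ⟨C, hC⟩ := hf_bdd
  obtain ⟨M, hM⟩ := hp_bdd
  have hq_cont : Continuous fun x : ℝ => p |x| :=
    hp_cont.comp_continuous continuous_abs fun x => abs_nonneg x
  have hq_pos : ∀ x : ℝ, 0 < p |x| := fun x => hp_pos _ (abs_nonneg x)
  have hq_lim : Tendsto (fun x : ℝ => p |x|) (cocompact ℝ) (𝓝 0) := by
    rw [cocompact_eq_atBot_atTop, ← comap_abs_atTop]
    exact hp_lim.comp tendsto_comap
  refine ⟨fun α => ∫ t in Ioo 0 T, h t * p |h t| ^ α, fun α hα => ?_,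
    tendsto_integral_mul_rpow_nhdsGT_zero h_int
      (hq_cont.measurable.comp_aemeasurable h_int.aemeasurable) (fun t => hq_pos (h t))
      (fun t => hM _ (abs_nonneg (h t)))⟩
  exact tendsto_integral_comp_of_isLittleO
    (continuous_id.mul (hq_cont.rpow_const fun _ => Or.inr hα.le))
    (isLittleO_self_mul_rpow_of_tendsto_zero hq_lim hα) hf_int hC h_int hae

theorem stmt1 (T : ℝ) (hT : 0 < T)
    (f : ℕ → ℝ → ℝ) (h : ℝ → ℝ) (p : ℝ → ℝ)
    (hf_int : ∀ m, IntegrableOn (f m) (Set.Ioo 0 T))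
    (hf_bdd : ∃ C : ℝ, ∀ m, (∫ t in Set.Ioo (0:ℝ) T, |f m t|) ≤ C)
    (h_int : IntegrableOn h (Set.Ioo 0 T))
    (hae : ∀ᵐ t ∂(volume.restrict (Set.Ioo (0:ℝ) T)),
      Tendsto (fun m => f m t) atTop (𝓝 (h t)))
    (hp_cont : ContinuousOn p (Set.Ici 0))
    (hp_pos : ∀ s ∈ Set.Ici (0:ℝ), 0 < p s)
    (hp_bdd : ∃ M : ℝ, ∀ s ∈ Set.Ici (0:ℝ), p s ≤ M)
    (hp_lim : Tendsto p atTop (𝓝 0)) :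
    ∃ L : ℝ → ℝ,
      (∀ α > (0:ℝ), Tendsto
        (fun m => ∫ t in Set.Ioo (0:ℝ) T, f m t * p |f m t| ^ α) atTop (𝓝 (L α))) ∧
      Tendsto L (𝓝[>] (0:ℝ)) (𝓝 (∫ t in Set.Ioo (0:ℝ) T, h t)) :=
  stmt1_general T f h p hf_int hf_bdd h_int hae hp_cont hp_pos hp_bdd hp_lim
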